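/- Fix N ≥ 2. Then (∑_{i = 1}^{N−1} (if i ∈ P_{2,N} then τ_N(i)·i else 0)) + N·(∑_{j = 0}^{N−1} (if N ≤ 2·j and j ∈ P_{2,N} then (1/2)·τ_N(j) else 0)) ≤ 3·N², as real numbers. That is, the total mass of the instantiated occupation invariant of the Fast Dice Roller is at most 3N² (in particular finite, which witnesses positive almost sure termination). -/
import Mathlib


open scoped Classical

/-- `F N i`: the least `k` with `2^k ≡ i (mod N)`, or `∞` if no such `k` exists. -/
noncomputable def F (N i : ℕ) : ℕ∞ :=
  sInf {k : ℕ∞ | ∃ m : ℕ, k = (m : ℕ∞) ∧ 2 ^ m ≡ i [MOD N]}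

/-- `L N i`: the least `l ≥ 1` with `i·2^l ≡ i (mod N)`, or `∞` if no such `l` exists. -/
noncomputable def L (N i : ℕ) : ℕ∞ :=
  sInf {k : ℕ∞ | ∃ l : ℕ, k = (l : ℕ∞) ∧ 1 ≤ l ∧ i * 2 ^ l ≡ i [MOD N]}

/-- `P2 N`: the set of residues of powers of two modulo `N`. -/
def P2 (N : ℕ) : Set ℕ := {i : ℕ | ∃ k : ℕ, 2 ^ k ≡ i [MOD N]}

/-- The instantiation `τ_N(i) = (1/2)^{F_N(i)} · (1 − (1/2)^{L_N(i)})⁻¹` (with the second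
factor equal to `1` when `L_N(i) = ∞`). -/
noncomputable def tau (N i : ℕ) : ℝ :=
  if L N i = ⊤ then (1 / 2 : ℝ) ^ (F N i).toNat
  else (1 / 2 : ℝ) ^ (F N i).toNat * (1 - (1 / 2 : ℝ) ^ (L N i).toNat)⁻¹

lemma one_le_L (N i : ℕ) : 1 ≤ L N i := by
  apply le_sInf
  rintro k ⟨l, rfl, hl, -⟩
  exact_mod_cast hl

lemma tau_nonneg (N i : ℕ) : 0 ≤ tau N i := by
  unfold tau
  split
  · positivity
  · apply mul_nonneg (by positivity)
    apply inv_nonneg.mpr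
    have h1 : 1 ≤ (L N i).toNat := by
      have := one_le_L N i
      rename_i h
      lift L N i to ℕ using h with n hn
      simpa using this
    have : (1 / 2 : ℝ) ^ (L N i).toNat ≤ (1 / 2 : ℝ) ^ 1 :=
      pow_le_pow_of_le_one (by norm_num) (by norm_num) h1
    norm_num at this ⊢
    linarith

lemma tau_le_two (N i : ℕ) : tau N i ≤ 2 := by
  unfold tau
  split
  · calc (1 / 2 : ℝ) ^ (F N i).toNat ≤ 1 := pow_le_one₀ (by norm_num) (by norm_num)
      _ ≤ 2 := by norm_num
  · have h1 : 1 ≤ (L N i).toNat := by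
      have := one_le_L N i
      rename_i h
      lift L N i to ℕ using h with n hn
      simpa using this
    have hp : (1 / 2 : ℝ) ^ (L N i).toNat ≤ (1 / 2 : ℝ) ^ 1 :=
      pow_le_pow_of_le_one (by norm_num) (by norm_num) h1
    have h2 : (1 / 2 : ℝ) ≤ 1 - (1 / 2 : ℝ) ^ (L N i).toNat := by
      norm_num at hp ⊢; linarith
    have hinv : (1 - (1 / 2 : ℝ) ^ (L N i).toNat)⁻¹ ≤ 2 := by
      rw [inv_le_comm₀ (by linarith) (by norm_num)]
      linarith
    calc (1 / 2 : ℝ) ^ (F N i).toNat * (1 - (1 / 2 : ℝ) ^ (L N i).toNat)⁻¹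
        ≤ 1 * 2 := by
          apply mul_le_mul (pow_le_one₀ (by norm_num) (by norm_num)) hinv _ (by norm_num)
          apply inv_nonneg.mpr; linarith
      _ = 2 := by ring

/-- The total mass of the instantiated occupation invariant of the Fast Dice Roller is at
most `3·N²` (in particular finite, witnessing positive almost sure termination). -/
theorem tau_total_mass_le (N : ℕ) (hN : 2 ≤ N) :
    (∑ i ∈ Finset.Ico 1 N, if i ∈ P2 N then tau N i * i else 0) +
      (N : ℝ) * (∑ j ∈ Finset.range N,
        if N ≤ 2 * j ∧ j ∈ P2 N then (1 / 2 : ℝ) * tau N j else 0) ≤ 3 * (N : ℝ) ^ 2 := by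
  have h1 : (∑ i ∈ Finset.Ico 1 N, if i ∈ P2 N then tau N i * i else 0)
      ≤ (Finset.Ico 1 N).card • (2 * (N : ℝ)) := by
    apply Finset.sum_le_card_nsmul
    intro i hi
    simp only [Finset.mem_Ico] at hi
    split
    · have hiN : (i : ℝ) ≤ N := by exact_mod_cast hi.2.le
      have := tau_le_two N i
      have h0 := tau_nonneg N i
      calc tau N i * i ≤ 2 * (i : ℝ) := by
            apply mul_le_mul this le_rfl (by positivity) (by norm_num)
        _ ≤ 2 * N := by linarith
    · positivity
  have h2 : (∑ j ∈ Finset.range N,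
      if N ≤ 2 * j ∧ j ∈ P2 N then (1 / 2 : ℝ) * tau N j else 0)
      ≤ (Finset.range N).card • (1 : ℝ) := by
    apply Finset.sum_le_card_nsmul
    intro j _
    split
    · have := tau_le_two N j
      linarith
    · norm_num
  rw [Nat.card_Ico] at h1
  rw [Finset.card_range] at h2
  have hc : ((N - 1 : ℕ) : ℝ) ≤ (N : ℝ) := by
    exact_mod_cast Nat.sub_le N 1
  have hc0 : (0 : ℝ) ≤ (N : ℝ) := by positivity
  have h1' : (∑ i ∈ Finset.Ico 1 N, if i ∈ P2 N then tau N i * i else 0)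
      ≤ (N : ℝ) * (2 * N) := by
    rw [nsmul_eq_mul] at h1
    calc _ ≤ ((N - 1 : ℕ) : ℝ) * (2 * (N : ℝ)) := h1
      _ ≤ (N : ℝ) * (2 * N) := by nlinarith
  have h2' : (N : ℝ) * (∑ j ∈ Finset.range N,
      if N ≤ 2 * j ∧ j ∈ P2 N then (1 / 2 : ℝ) * tau N j else 0) ≤ (N : ℝ) * N := by
    rw [nsmul_eq_mul, mul_one] at h2
    exact mul_le_mul_of_nonneg_left h2 hc0
  nlinarith
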